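/- For every error bound ε̃ > 0, probability level δ̃ ∈ (0,1), horizon T > 0 and every measurable essentially bounded control u : [0,T] → ℝ^{n_c}, there exists m₀ ∈ ℕ such that for every m ≥ m₀, with probability at least 1−δ̃ the following holds: all empirical mass matrices C̃⁽ⁱ⁾_m, i ∈ {0,…,n_c}, are invertible and ‖L_V^u(t) − L̃_m^u(t)‖_F ≤ ε̃ for almost every t ∈ [0,T]; in particular, ess inf_{t∈[0,T]} ℙ(‖L_V^u(t) − L̃_m^u(t)‖_F ≤ ε̃) ≥ 1−δ̃. -/

import Mathlib

/-! The strong law of large numbers, applied entrywise, makes the empirical matrices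
`C̃⁽ⁱ⁾_m` and `Ã^{F_i}_m` converge almost surely to `C` and `A^{F_i}` (the integrands are
continuous, hence integrable on the compact `𝕏`). Matrix inversion is continuous at the
invertible `C`, so almost surely `C̃⁽ⁱ⁾_m` is eventually invertible and `L̃^{F_i}_m → L_V^{F_i}`.
Almost sure eventual events have probability tending to one, so for large `m`, with probability
at least `1 − δ̃`, every `‖L_V^{F_i} − L̃^{F_i}_m‖_F ≤ ε̃ / (1 + 2 n_c K)`, where `K` bounds `u`.
The surrogate error `L_V^u(t) − L̃_m^u(t)` is the same bilinear combination of these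
differences, hence at most `ε̃` whenever `|u_i(t)| ≤ K`. -/

open MeasureTheory ProbabilityTheory

/-- Frobenius norm of a real `N × N` matrix. -/
noncomputable def frobeniusNorm {N : ℕ} (M : Matrix (Fin N) (Fin N) ℝ) : ℝ :=
  Real.sqrt (∑ i, ∑ j, (M i j) ^ 2)

open Filter Topology

section BilinearCombination

variable {M : Type*} {n : ℕ}

def bilinearComb [AddCommGroup M] [Module ℝ M] (D : Fin (n + 1) → M) (c : Fin n → ℝ) : M :=
  D 0 + ∑ i, c i • (D i.succ - D 0)

theorem bilinearComb_sub [AddCommGroup M] [Module ℝ M] (D D' : Fin (n + 1) → M)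
    (c : Fin n → ℝ) : bilinearComb D c - bilinearComb D' c = bilinearComb (D - D') c := by
  simp only [bilinearComb, Pi.sub_apply, smul_sub, Finset.sum_sub_distrib]
  abel

theorem norm_bilinearComb_le [SeminormedAddCommGroup M] [NormedSpace ℝ M]
    {D : Fin (n + 1) → M} {c : Fin n → ℝ} {ε K : ℝ}
    (hD : ∀ j, ‖D j‖ ≤ ε) (hc : ∀ i, |c i| ≤ K) :
    ‖bilinearComb D c‖ ≤ ε * (1 + 2 * n * K) :=
  calc ‖bilinearComb D c‖
      ≤ ‖D 0‖ + ∑ i, ‖c i • (D i.succ - D 0)‖ :=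
        (norm_add_le _ _).trans (add_le_add_right (norm_sum_le _ _) _)
    _ ≤ ε + ∑ _i : Fin n, K * (ε + ε) := by
        gcongr with i
        · exact hD 0
        · rw [norm_smul, Real.norm_eq_abs]
          exact mul_le_mul (hc i) ((norm_sub_le _ _).trans (add_le_add (hD _) (hD _)))
            (norm_nonneg _) ((abs_nonneg _).trans (hc i))
    _ = ε * (1 + 2 * n * K) := by
        simp only [Finset.sum_const, Finset.card_univ, Fintype.card_fin, nsmul_eq_mul]
        ring

end BilinearCombination

section Frobenius

attribute [local instance] Matrix.frobeniusNormedAddCommGroup Matrix.frobeniusNormedSpace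

variable {N : ℕ}

theorem frobeniusNorm_eq_norm (M : Matrix (Fin N) (Fin N) ℝ) : frobeniusNorm M = ‖M‖ := by
  simp only [Matrix.frobenius_norm_def, frobeniusNorm, Real.sqrt_eq_rpow, Real.norm_eq_abs,
    Real.rpow_two, sq_abs]

theorem frobeniusNorm_bilinearComb_le {n : ℕ} {D : Fin (n + 1) → Matrix (Fin N) (Fin N) ℝ}
    {c : Fin n → ℝ} {ε K : ℝ} (hD : ∀ j, frobeniusNorm (D j) ≤ ε) (hc : ∀ i, |c i| ≤ K) :
    frobeniusNorm (bilinearComb D c) ≤ ε * (1 + 2 * n * K) := by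
  simp only [frobeniusNorm_eq_norm] at hD ⊢
  exact norm_bilinearComb_le hD hc

theorem Filter.Tendsto.eventually_frobeniusNorm_sub_le {α : Type*} {l : Filter α}
    {M : α → Matrix (Fin N) (Fin N) ℝ} {M₀ : Matrix (Fin N) (Fin N) ℝ}
    (h : Tendsto M l (𝓝 M₀)) {ε : ℝ} (hε : 0 < ε) :
    ∀ᶠ a in l, frobeniusNorm (M₀ - M a) ≤ ε := by
  simp only [frobeniusNorm_eq_norm, norm_sub_rev M₀]
  exact (tendsto_iff_norm_sub_tendsto_zero.1 h).eventually (ge_mem_nhds hε)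

end Frobenius

section MatrixInverse

variable {n 𝕜 α : Type*} [Fintype n] [DecidableEq n] [NormedField 𝕜] {l : Filter α}
  {Ĉ Â : α → Matrix n n 𝕜} {C A : Matrix n n 𝕜}

theorem Filter.Tendsto.eventually_isUnit_det (hĈ : Tendsto Ĉ l (𝓝 C)) (hC : IsUnit C.det) :
    ∀ᶠ a in l, IsUnit (Ĉ a).det := by
  simp only [isUnit_iff_ne_zero] at hC ⊢
  exact (continuous_id.matrix_det.tendsto C).comp hĈ (isOpen_ne.mem_nhds hC)

theorem Filter.Tendsto.inv_mul_of_isUnit_det (hĈ : Tendsto Ĉ l (𝓝 C)) (hÂ : Tendsto Â l (𝓝 A))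
    (hC : IsUnit C.det) : Tendsto (fun a => (Ĉ a)⁻¹ * Â a) l (𝓝 (C⁻¹ * A)) := by
  have hinv : ContinuousAt Inv.inv C := by
    refine continuousAt_matrix_inv C ?_
    rw [Ring.inverse_eq_inv']
    exact continuousAt_inv₀ (isUnit_iff_ne_zero.1 hC)
  exact (hinv.tendsto.comp hĈ).mul hÂ

end MatrixInverse

section StrongLaw

variable {E Ω : Type*} [MeasurableSpace E] [MeasurableSpace Ω] {P : Measure Ω} {μ : Measure E}
  {Xs : ℕ → Ω → E}

theorem ae_tendsto_sampleMean (hXmeas : ∀ r, Measurable (Xs r)) (hXindep : iIndepFun Xs P)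
    (hXdist : ∀ r, P.map (Xs r) = μ) {h : E → ℝ} (hh : Measurable h) (hint : Integrable h μ) :
    ∀ᵐ ω ∂P, Tendsto (fun m : ℕ => (1 / m : ℝ) * ∑ r ∈ Finset.range m, h (Xs r ω))
      atTop (𝓝 (∫ y, h y ∂μ)) := by
  have hint₀ : Integrable (fun ω => h (Xs 0 ω)) P :=
    (integrable_map_measure hh.aestronglyMeasurable (hXmeas 0).aemeasurable).1
      (hXdist 0 ▸ hint)
  have hindep : Pairwise fun r s => IndepFun (fun ω => h (Xs r ω)) (fun ω => h (Xs s ω)) P :=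
    fun r s hrs => (hXindep.indepFun hrs).comp hh hh
  have hident (r : ℕ) : IdentDistrib (fun ω => h (Xs r ω)) (fun ω => h (Xs 0 ω)) P P :=
    (⟨(hXmeas r).aemeasurable, (hXmeas 0).aemeasurable, by rw [hXdist, hXdist]⟩ :
      IdentDistrib (Xs r) (Xs 0) P P).comp hh
  have hmean : ∫ ω, h (Xs 0 ω) ∂P = ∫ y, h y ∂μ := by
    rw [← hXdist 0, integral_map (hXmeas 0).aemeasurable hh.aestronglyMeasurable]
  filter_upwards [strong_law_ae_real _ hint₀ hindep hident] with ω hω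
  simpa only [one_div, inv_mul_eq_div, hmean] using hω

theorem ae_tendsto_sampleMean_matrix {ι κ : Type*} [Finite ι] [Finite κ]
    (hXmeas : ∀ r, Measurable (Xs r)) (hXindep : iIndepFun Xs P)
    (hXdist : ∀ r, P.map (Xs r) = μ) {Φ : ι → κ → E → ℝ} (hΦ : ∀ k l, Measurable (Φ k l))
    (hint : ∀ k l, Integrable (Φ k l) μ) {M : ℕ → Ω → Matrix ι κ ℝ}
    (hM : ∀ m ω k l, M m ω k l = (1 / m : ℝ) * ∑ r ∈ Finset.range m, Φ k l (Xs r ω)) :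
    ∀ᵐ ω ∂P, Tendsto (fun m => M m ω) atTop (𝓝 (Matrix.of fun k l => ∫ y, Φ k l y ∂μ)) := by
  have hentry : ∀ᵐ ω ∂P, ∀ k l, Tendsto (fun m => M m ω k l) atTop (𝓝 (∫ y, Φ k l y ∂μ)) := by
    simp only [ae_all_iff, hM]
    exact fun k l => ae_tendsto_sampleMean hXmeas hXindep hXdist (hΦ k l) (hint k l)
  filter_upwards [hentry] with ω hω
  exact tendsto_pi_nhds.2 fun k => tendsto_pi_nhds.2 (hω k)

theorem ae_eventually_isUnit_det_and_frobeniusNorm_inv_mul_sub_le {N : ℕ}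
    (hXmeas : ∀ r, Measurable (Xs r)) (hXindep : iIndepFun Xs P)
    (hXdist : ∀ r, P.map (Xs r) = μ) {Φ Ψ : Fin N → Fin N → E → ℝ}
    (hΦ : ∀ k l, Measurable (Φ k l)) (hΦint : ∀ k l, Integrable (Φ k l) μ)
    (hΨ : ∀ k l, Measurable (Ψ k l)) (hΨint : ∀ k l, Integrable (Ψ k l) μ)
    {C A : Matrix (Fin N) (Fin N) ℝ} (hC : ∀ k l, C k l = ∫ y, Φ k l y ∂μ)
    (hA : ∀ k l, A k l = ∫ y, Ψ k l y ∂μ) (hCdet : IsUnit C.det)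
    {Ĉ Â : ℕ → Ω → Matrix (Fin N) (Fin N) ℝ}
    (hĈ : ∀ m ω k l, Ĉ m ω k l = (1 / m : ℝ) * ∑ r ∈ Finset.range m, Φ k l (Xs r ω))
    (hÂ : ∀ m ω k l, Â m ω k l = (1 / m : ℝ) * ∑ r ∈ Finset.range m, Ψ k l (Xs r ω))
    {ε : ℝ} (hε : 0 < ε) :
    ∀ᵐ ω ∂P, ∀ᶠ m in atTop,
      IsUnit (Ĉ m ω).det ∧ frobeniusNorm (C⁻¹ * A - (Ĉ m ω)⁻¹ * Â m ω) ≤ ε := by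
  filter_upwards [Matrix.ext hC ▸ ae_tendsto_sampleMean_matrix hXmeas hXindep hXdist hΦ hΦint hĈ,
    Matrix.ext hA ▸ ae_tendsto_sampleMean_matrix hXmeas hXindep hXdist hΨ hΨint hÂ]
    with ω hĈω hÂω
  exact (hĈω.eventually_isUnit_det hCdet).and
    ((hĈω.inv_mul_of_isUnit_det hÂω hCdet).eventually_frobeniusNorm_sub_le hε)

end StrongLaw

theorem tendsto_measure_setOf_of_ae_eventually {Ω : Type*} [MeasurableSpace Ω] {P : Measure Ω}
    [IsProbabilityMeasure P] {p : ℕ → Ω → Prop} (h : ∀ᵐ ω ∂P, ∀ᶠ m in atTop, p m ω) :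
    Tendsto (fun m => (P {ω | p m ω}).toReal) atTop (𝓝 1) := by
  set S : ℕ → Set Ω := fun m₀ => {ω | ∀ m ≥ m₀, p m ω}
  have hS : Monotone S := fun a b hab ω hω m hm => hω m (hab.trans hm)
  have hunion : P (⋃ m₀, S m₀) = 1 := by
    rw [← measure_univ (μ := P)]
    refine measure_congr (ae_eq_univ.2 ?_)
    have hcompl : (⋃ m₀, S m₀)ᶜ = {ω | ¬∀ᶠ m in atTop, p m ω} := by
      ext ω
      simp [S, eventually_atTop]
    exact hcompl ▸ ae_iff.1 h
  have hmeasure : Tendsto (fun m => P {ω | p m ω}) atTop (𝓝 1) :=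
    tendsto_of_tendsto_of_tendsto_of_le_of_le (hunion ▸ tendsto_measure_iUnion_atTop hS)
      tendsto_const_nhds (fun m => measure_mono (s := S m) fun ω hω => hω m le_rfl)
      fun _ => prob_le_one
  exact (ENNReal.tendsto_toReal ENNReal.one_ne_top).comp hmeasure

theorem eDMD_bilinear_generator_error_bound_general {d N nc : ℕ}
    (X : Set (EuclideanSpace ℝ (Fin d))) (hXcpt : IsCompact X)
    (hXpos : 0 < volume X)
    (μ : Measure (EuclideanSpace ℝ (Fin d)))
    (hμ : μ = (volume X)⁻¹ • volume.restrict X)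
    (ψ : Fin N → EuclideanSpace ℝ (Fin d) → ℝ)
    (hψ : ∀ j, ContDiff ℝ 1 (ψ j))
    (C : Matrix (Fin N) (Fin N) ℝ)
    (hC : ∀ k l, C k l = ∫ y, ψ k y * ψ l y ∂μ)
    (hCinv : IsUnit C.det)
    (f : EuclideanSpace ℝ (Fin d) → EuclideanSpace ℝ (Fin d)) (hf : Continuous f)
    (g : Fin nc → EuclideanSpace ℝ (Fin d) → EuclideanSpace ℝ (Fin d))
    (hg : ∀ i, Continuous (g i))
    (F : Fin (nc + 1) → EuclideanSpace ℝ (Fin d) → EuclideanSpace ℝ (Fin d))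
    (hF0 : F 0 = f) (hFsucc : ∀ i : Fin nc, F i.succ = fun y => f y + g i y)
    (LF : Fin (nc + 1) → Fin N → EuclideanSpace ℝ (Fin d) → ℝ)
    (hLF : ∀ i l y, LF i l y = fderiv ℝ (ψ l) y (F i y))
    (A : Fin (nc + 1) → Matrix (Fin N) (Fin N) ℝ)
    (hA : ∀ i k l, A i k l = ∫ y, ψ k y * LF i l y ∂μ)
    (LV : Fin (nc + 1) → Matrix (Fin N) (Fin N) ℝ)
    (hLV : ∀ i, LV i = C⁻¹ * A i)
    {Ω : Type*} [MeasurableSpace Ω] (P : Measure Ω) [IsProbabilityMeasure P]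
    (Xs : Fin (nc + 1) → ℕ → Ω → EuclideanSpace ℝ (Fin d))
    (hXmeas : ∀ i r, Measurable (Xs i r))
    (hXindep : ∀ i, iIndepFun (Xs i) P)
    (hXdist : ∀ i r, P.map (Xs i r) = μ)
    (Ct : Fin (nc + 1) → ℕ → Ω → Matrix (Fin N) (Fin N) ℝ)
    (hCt : ∀ i m ω k l,
      Ct i m ω k l = (1 / m : ℝ) * ∑ r ∈ Finset.range m, ψ k (Xs i r ω) * ψ l (Xs i r ω))
    (At : Fin (nc + 1) → ℕ → Ω → Matrix (Fin N) (Fin N) ℝ)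
    (hAt : ∀ i m ω k l,
      At i m ω k l = (1 / m : ℝ) * ∑ r ∈ Finset.range m, ψ k (Xs i r ω) * LF i l (Xs i r ω))
    -- the eDMD estimators of the generators:
    (Lt : Fin (nc + 1) → ℕ → Ω → Matrix (Fin N) (Fin N) ℝ)
    (hLt : ∀ i m ω, Lt i m ω = (Ct i m ω)⁻¹ * At i m ω)
    -- horizon and measurable, essentially bounded control:
    (T : ℝ)
    (u : ℝ → Fin nc → ℝ)
    (hubdd : ∃ K : ℝ, ∀ᵐ t ∂(volume.restrict (Set.Icc (0 : ℝ) T)), ∀ i, |u t i| ≤ K)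
    -- the bilinear surrogate generators:
    (LVu : ℝ → Matrix (Fin N) (Fin N) ℝ)
    (hLVu : ∀ t, LVu t = LV 0 + ∑ i : Fin nc, u t i • (LV i.succ - LV 0))
    (Ltu : ℕ → Ω → ℝ → Matrix (Fin N) (Fin N) ℝ)
    (hLtu : ∀ m ω t,
      Ltu m ω t = Lt 0 m ω + ∑ i : Fin nc, u t i • (Lt i.succ m ω - Lt 0 m ω)) :
    ∀ ε > 0, ∀ δ ∈ Set.Ioo (0 : ℝ) 1, ∃ m₀ : ℕ, ∀ m ≥ m₀,
      (1 - δ ≤ (P {ω | (∀ i, IsUnit (Ct i m ω).det) ∧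
          ∀ᵐ t ∂(volume.restrict (Set.Icc (0 : ℝ) T)),
            frobeniusNorm (LVu t - Ltu m ω t) ≤ ε}).toReal) ∧
      (∀ᵐ t ∂(volume.restrict (Set.Icc (0 : ℝ) T)),
        1 - δ ≤ (P {ω | frobeniusNorm (LVu t - Ltu m ω t) ≤ ε}).toReal) := by
  intro ε hε δ hδ
  obtain ⟨K, hK⟩ := hubdd
  set ε' := ε / (1 + 2 * nc * max K 0)
  have hε' : 0 < ε' := by positivity
  have hint (h : EuclideanSpace ℝ (Fin d) → ℝ) (hh : Continuous h) : Integrable h μ :=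
    hμ ▸ (hh.continuousOn.integrableOn_compact hXcpt).smul_measure (ENNReal.inv_ne_top.2 hXpos.ne')
  have hFcont : ∀ i, Continuous (F i) := Fin.cases (hF0 ▸ hf) fun i => hFsucc i ▸ hf.add (hg i)
  have hLFcont (i l) : Continuous (LF i l) := by
    simpa only [← funext (hLF i l)] using
      ((hψ l).continuous_fderiv one_ne_zero).clm_apply (hFcont i)
  have hgood : ∀ᵐ ω ∂P, ∀ᶠ m in atTop,
      ∀ i, IsUnit (Ct i m ω).det ∧ frobeniusNorm (LV i - Lt i m ω) ≤ ε' := by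
    simp only [eventually_all, hLV, hLt]
    exact fun i => ae_eventually_isUnit_det_and_frobeniusNorm_inv_mul_sub_le (hXmeas i)
      (hXindep i) (hXdist i) (fun k l => ((hψ k).continuous.mul (hψ l).continuous).measurable)
      (fun k l => hint _ ((hψ k).continuous.mul (hψ l).continuous))
      (fun k l => ((hψ k).continuous.mul (hLFcont i l)).measurable)
      (fun k l => hint _ ((hψ k).continuous.mul (hLFcont i l))) hC (hA i) hCinv (hCt i) (hAt i) hε'
  obtain ⟨m₀, hm₀⟩ := eventually_atTop.1 <|
    (tendsto_measure_setOf_of_ae_eventually hgood).eventually (lt_mem_nhds (sub_lt_self 1 hδ.1))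
  refine ⟨m₀, fun m hm => ?_⟩
  have hprob (W : Set Ω) (hW : {ω | ∀ i, IsUnit (Ct i m ω).det ∧
      frobeniusNorm (LV i - Lt i m ω) ≤ ε'} ⊆ W) : 1 - δ ≤ (P W).toReal :=
    (hm₀ m hm).le.trans (ENNReal.toReal_mono (measure_ne_top P W) (measure_mono hW))
  have hbound (ω) (hω : ∀ i, IsUnit (Ct i m ω).det ∧ frobeniusNorm (LV i - Lt i m ω) ≤ ε')
      (t) (hut : ∀ i, |u t i| ≤ K) : frobeniusNorm (LVu t - Ltu m ω t) ≤ ε := by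
    rw [hLVu, hLtu]
    refine (bilinearComb_sub LV (Lt · m ω) (u t) ▸
      frobeniusNorm_bilinearComb_le (fun j => (hω j).2)
        fun i => (hut i).trans (le_max_left K 0)).trans_eq ?_
    exact div_mul_cancel₀ ε (by positivity)
  refine ⟨hprob _ fun ω hω => ⟨fun i => (hω i).1, ?_⟩, ?_⟩
  · filter_upwards [hK] with t hut using hbound ω hω t hut
  · filter_upwards [hK] with t hut using hprob _ fun ω hω => hbound ω hω t hut

/-- finite-data probabilistic error bound for the bilinear surrogate
generator: for every `ε̃ > 0`, `δ̃ ∈ (0,1)`, `T > 0` and measurable essentially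
bounded control `u`, there is `m₀` such that for all `m ≥ m₀`, with probability at
least `1 − δ̃` all empirical mass matrices are invertible and
`‖L_V^u(t) − L̃_m^u(t)‖_F ≤ ε̃` for a.e. `t ∈ [0,T]`; in particular
`ess inf_{t∈[0,T]} ℙ(‖L_V^u(t) − L̃_m^u(t)‖_F ≤ ε̃) ≥ 1 − δ̃`. -/
theorem eDMD_bilinear_generator_error_bound {d N nc : ℕ}
    (X : Set (EuclideanSpace ℝ (Fin d))) (hXcpt : IsCompact X)
    (hXpos : 0 < volume X)
    (μ : Measure (EuclideanSpace ℝ (Fin d)))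
    (hμ : μ = (volume X)⁻¹ • volume.restrict X)
    (ψ : Fin N → EuclideanSpace ℝ (Fin d) → ℝ)
    (hψ : ∀ j, ContDiff ℝ 1 (ψ j))
    (C : Matrix (Fin N) (Fin N) ℝ)
    (hC : ∀ k l, C k l = ∫ y, ψ k y * ψ l y ∂μ)
    (hCinv : IsUnit C.det)
    (f : EuclideanSpace ℝ (Fin d) → EuclideanSpace ℝ (Fin d)) (hf : Continuous f)
    (g : Fin nc → EuclideanSpace ℝ (Fin d) → EuclideanSpace ℝ (Fin d))
    (hg : ∀ i, Continuous (g i))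
    (F : Fin (nc + 1) → EuclideanSpace ℝ (Fin d) → EuclideanSpace ℝ (Fin d))
    (hF0 : F 0 = f) (hFsucc : ∀ i : Fin nc, F i.succ = fun y => f y + g i y)
    (LF : Fin (nc + 1) → Fin N → EuclideanSpace ℝ (Fin d) → ℝ)
    (hLF : ∀ i l y, LF i l y = fderiv ℝ (ψ l) y (F i y))
    (A : Fin (nc + 1) → Matrix (Fin N) (Fin N) ℝ)
    (hA : ∀ i k l, A i k l = ∫ y, ψ k y * LF i l y ∂μ)
    (LV : Fin (nc + 1) → Matrix (Fin N) (Fin N) ℝ)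
    (hLV : ∀ i, LV i = C⁻¹ * A i)
    {Ω : Type*} [MeasurableSpace Ω] (P : Measure Ω) [IsProbabilityMeasure P]
    (Xs : Fin (nc + 1) → ℕ → Ω → EuclideanSpace ℝ (Fin d))
    (hXmeas : ∀ i r, Measurable (Xs i r))
    (hXindep : ∀ i, iIndepFun (Xs i) P)
    (hXdist : ∀ i r, P.map (Xs i r) = μ)
    (Ct : Fin (nc + 1) → ℕ → Ω → Matrix (Fin N) (Fin N) ℝ)
    (hCt : ∀ i m ω k l,
      Ct i m ω k l = (1 / m : ℝ) * ∑ r ∈ Finset.range m, ψ k (Xs i r ω) * ψ l (Xs i r ω))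
    (At : Fin (nc + 1) → ℕ → Ω → Matrix (Fin N) (Fin N) ℝ)
    (hAt : ∀ i m ω k l,
      At i m ω k l = (1 / m : ℝ) * ∑ r ∈ Finset.range m, ψ k (Xs i r ω) * LF i l (Xs i r ω))
    -- the eDMD estimators of the generators:
    (Lt : Fin (nc + 1) → ℕ → Ω → Matrix (Fin N) (Fin N) ℝ)
    (hLt : ∀ i m ω, Lt i m ω = (Ct i m ω)⁻¹ * At i m ω)
    -- horizon and measurable, essentially bounded control:
    (T : ℝ) (hT : 0 < T)
    (u : ℝ → Fin nc → ℝ) (hu : Measurable u)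
    (hubdd : ∃ K : ℝ, ∀ᵐ t ∂(volume.restrict (Set.Icc (0 : ℝ) T)), ∀ i, |u t i| ≤ K)
    -- the bilinear surrogate generators:
    (LVu : ℝ → Matrix (Fin N) (Fin N) ℝ)
    (hLVu : ∀ t, LVu t = LV 0 + ∑ i : Fin nc, u t i • (LV i.succ - LV 0))
    (Ltu : ℕ → Ω → ℝ → Matrix (Fin N) (Fin N) ℝ)
    (hLtu : ∀ m ω t,
      Ltu m ω t = Lt 0 m ω + ∑ i : Fin nc, u t i • (Lt i.succ m ω - Lt 0 m ω)) :
    ∀ ε > 0, ∀ δ ∈ Set.Ioo (0 : ℝ) 1, ∃ m₀ : ℕ, ∀ m ≥ m₀,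
      (1 - δ ≤ (P {ω | (∀ i, IsUnit (Ct i m ω).det) ∧
          ∀ᵐ t ∂(volume.restrict (Set.Icc (0 : ℝ) T)),
            frobeniusNorm (LVu t - Ltu m ω t) ≤ ε}).toReal) ∧
      (∀ᵐ t ∂(volume.restrict (Set.Icc (0 : ℝ) T)),
        1 - δ ≤ (P {ω | frobeniusNorm (LVu t - Ltu m ω t) ≤ ε}).toReal) :=
  eDMD_bilinear_generator_error_bound_general X hXcpt hXpos μ hμ ψ hψ C hC hCinv f hf g hg F hF0
    hFsucc LF hLF A hA LV hLV P Xs hXmeas hXindep hXdist Ct hCt At hAt Lt hLt T u hubdd LVu hLVu Ltu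
    hLtu
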